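/- arXiv:2103.11250 — 2 statements merged into one kernel-verified Lean document; each statement's English description precedes it below -/
import Mathlib

section
/- Let N be a positive integer and define U^G(x_1, …, x_N) := Σ_{l=1}^N x_l²/2 − Σ_{1≤j<k≤N} log(x_k − x_j) on the open chamber {x ∈ ℝ^N : x_1 < x_2 < ⋯ < x_N}. Then U^G attains a unique global minimum on this chamber, and the minimizer is (z_1, …, z_N), the increasingly ordered zeros of the physicists' Hermite polynomial H_N. -/
/-!
Stieltjes' electrostatic argument. On the convex chamber, `U^G` is a strictly convex quadratic
minus a sum of logarithms of linear forms, so it has at most one minimiser; it tends to `+∞` at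
infinity and at the walls of the chamber, so it has one. At the minimiser `z` the gradient
vanishes: `z_l = ∑_{k ≠ l} (z_l - z_k)⁻¹`. For `P = ∏ (X - z_k)` this says
`P''(z_l) = 2 z_l P'(z_l)`, so `P'' - 2 X P' + 2 N P`, whose degree is `< N`, vanishes at the `N`
nodes and is zero. The Hermite equation has, in degree `N`, a unique monic polynomial solution,
so `H_N = 2^N P`.
-/

open Polynomial Finset

/-- The physicists' Hermite polynomials, satisfying
`H_{n+1}(x) = 2 x H_n(x) - H_n'(x)`, equivalently
`H_n(x) = (-1)^n e^{x^2} (d/dx)^n e^{-x^2}`. -/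
noncomputable def physHermite : ℕ → Polynomial ℝ
  | 0 => 1
  | n + 1 => 2 * X * physHermite n - derivative (physHermite n)

/-- The Gaussian log-gas energy
`U^G(x) = ∑_l x_l²/2 - ∑_{j<k} log(x_k - x_j)`. -/
noncomputable def UG (N : ℕ) (x : Fin N → ℝ) : ℝ :=
  (∑ l, x l ^ 2 / 2) -
    ∑ p ∈ Finset.univ.filter (fun p : Fin N × Fin N => p.1 < p.2),
      Real.log (x p.2 - x p.1)

open Real

section HermiteOperator

variable {R : Type*} [CommRing R]

noncomputable def hermiteOp (n : ℕ) (p : R[X]) : R[X] :=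
  derivative (derivative p) - 2 * X * derivative p + C (2 * n : R) * p

lemma coeff_two_mul_X_mul_derivative (p : R[X]) (m : ℕ) :
    (2 * X * derivative p).coeff m = 2 * m * p.coeff m := by
  rcases m with _ | m
  · simp [mul_assoc]
  · rw [mul_assoc, coeff_ofNat_mul, coeff_X_mul, coeff_derivative]
    push_cast
    ring

lemma coeff_hermiteOp (n : ℕ) (p : R[X]) (m : ℕ) :
    (hermiteOp n p).coeff m =
      ((m : R) + 1) * ((m : R) + 2) * p.coeff (m + 2) + 2 * ((n : R) - m) * p.coeff m := by
  rw [hermiteOp, coeff_add, coeff_sub, coeff_two_mul_X_mul_derivative, coeff_C_mul,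
    coeff_derivative, coeff_derivative]
  push_cast
  ring

lemma hermiteOp_sub_C_mul (n : ℕ) (p q : R[X]) (a : R) :
    hermiteOp n (p - C a * q) = hermiteOp n p - C a * hermiteOp n q := by
  simp only [hermiteOp, derivative_sub, derivative_C_mul]
  ring

lemma degree_hermiteOp_lt {n : ℕ} {p : R[X]} (hp : p.natDegree ≤ n) :
    (hermiteOp n p).degree < n := by
  refine degree_lt_iff_coeff_zero _ _ |>.2 fun m hm => ?_
  rw [coeff_hermiteOp, coeff_eq_zero_of_natDegree_lt (by omega : p.natDegree < m + 2)]
  rcases (Nat.cast_le.1 hm).eq_or_lt with rfl | hm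
  · ring
  · rw [coeff_eq_zero_of_natDegree_lt (hp.trans_lt hm)]
    ring

lemma eq_zero_of_hermiteOp_eq_zero [IsDomain R] [CharZero R] {n : ℕ} {p : R[X]}
    (h : hermiteOp n p = 0) (hp : p.degree < n) : p = 0 := by
  by_contra hp0
  have hlt : p.natDegree < n := (natDegree_lt_iff_degree_lt hp0).2 hp
  have hcoeff := congrArg (coeff · p.natDegree) h
  simp only [coeff_hermiteOp, coeff_zero,
    coeff_eq_zero_of_natDegree_lt (by omega : p.natDegree < p.natDegree + 2), mul_zero,
    zero_add, mul_eq_zero, OfNat.ofNat_ne_zero, false_or, sub_eq_zero, Nat.cast_inj] at hcoeff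
  exact hcoeff.elim (by omega) (leadingCoeff_ne_zero.2 hp0)

end HermiteOperator

lemma physHermite_succ (n : ℕ) :
    physHermite (n + 1) = 2 * X * physHermite n - derivative (physHermite n) := rfl

lemma derivative_physHermite_succ (n : ℕ) :
    derivative (physHermite (n + 1)) = C (2 * (n + 1) : ℝ) * physHermite n := by
  induction n with
  | zero => simp [physHermite, ← map_ofNat C 2]
  | succ n ih =>
    rw [physHermite_succ (n + 1)]
    simp only [derivative_sub, derivative_mul, derivative_X, derivative_ofNat, ih, derivative_C,
      zero_mul, zero_add]
    rw [physHermite_succ n]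
    simp only [Nat.cast_add, Nat.cast_one, map_mul, map_add, map_natCast, map_one, map_ofNat]
    ring

lemma hermiteOp_physHermite (n : ℕ) : hermiteOp n (physHermite n) = 0 := by
  rcases n with _ | n
  · simp [hermiteOp, physHermite]
  · rw [hermiteOp, derivative_physHermite_succ, derivative_C_mul, physHermite_succ]
    simp only [Nat.cast_add, Nat.cast_one, map_mul, map_add, map_natCast, map_one, map_ofNat]
    ring

lemma natDegree_physHermite_le (n : ℕ) : (physHermite n).natDegree ≤ n := by
  induction n with
  | zero => simp [physHermite]
  | succ n ih =>
    rw [physHermite_succ]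
    refine (natDegree_sub_le _ _).trans (max_le ?_ ?_)
    · have : (2 * X : ℝ[X]).natDegree ≤ 1 := by compute_degree
      exact natDegree_mul_le.trans (by omega)
    · exact (natDegree_derivative_le _).trans (by omega)

lemma coeff_physHermite_self (n : ℕ) : (physHermite n).coeff n = 2 ^ n := by
  induction n with
  | zero => simp [physHermite]
  | succ n ih =>
    rw [physHermite_succ, coeff_sub, mul_assoc, coeff_ofNat_mul, coeff_X_mul, ih,
      coeff_eq_zero_of_natDegree_lt ((natDegree_derivative_le _).trans_lt
        (by have := natDegree_physHermite_le n; omega))]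
    ring

lemma natDegree_physHermite (n : ℕ) : (physHermite n).natDegree = n :=
  (natDegree_physHermite_le n).antisymm
    (le_natDegree_of_ne_zero (by simp [coeff_physHermite_self]))

lemma physHermite_ne_zero (n : ℕ) : physHermite n ≠ 0 := fun h =>
  pow_ne_zero n two_ne_zero (by simpa [h] using (coeff_physHermite_self n).symm)

lemma leadingCoeff_physHermite (n : ℕ) : (physHermite n).leadingCoeff = 2 ^ n := by
  rw [leadingCoeff, natDegree_physHermite, coeff_physHermite_self]

section Nodal

open Lagrange

variable {F ι : Type*} [Field F] [DecidableEq ι] {s : Finset ι} {v : ι → F}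

lemma eval_derivative_nodal_eq_mul_sum_inv {t : F} (ht : ∀ i ∈ s, t ≠ v i) :
    (derivative (nodal s v)).eval t = (nodal s v).eval t * ∑ i ∈ s, (t - v i)⁻¹ := by
  rw [derivative_nodal, eval_finsetSum, mul_sum]
  refine sum_congr rfl fun i hi => ?_
  rw [nodal_eq_mul_nodal_erase hi, eval_mul, eval_sub, eval_X, eval_C, mul_comm (t - v i),
    mul_assoc, mul_inv_cancel₀ (sub_ne_zero.2 (ht i hi)), mul_one]

lemma eval_derivative_derivative_nodal_at_node (hv : Set.InjOn v s) {j : ι} (hj : j ∈ s) :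
    (derivative (derivative (nodal s v))).eval (v j) =
      2 * (derivative (nodal s v)).eval (v j) * ∑ k ∈ s.erase j, (v j - v k)⁻¹ := by
  have hne : ∀ k ∈ s.erase j, v j ≠ v k := fun k hk h =>
    (mem_erase.1 hk).1 (hv (mem_of_mem_erase hk) hj h.symm)
  rw [eval_nodal_derivative_eval_node_eq hj, mul_assoc,
    ← eval_derivative_nodal_eq_mul_sum_inv hne,
    nodal_eq_mul_nodal_erase hj]
  simp only [derivative_mul, derivative_add, derivative_sub, derivative_X, derivative_C,
    sub_zero, one_mul, eval_add, eval_mul, eval_sub, eval_X, eval_C, sub_self, zero_mul]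
  ring

end Nodal

open Lagrange in
theorem physHermite_eq_C_mul_nodal {ι : Type*} [Fintype ι] [DecidableEq ι] {v : ι → ℝ}
    (hv : Function.Injective v) (hcrit : ∀ j, v j = ∑ k ∈ univ.erase j, (v j - v k)⁻¹) :
    physHermite (Fintype.card ι) = C (2 ^ Fintype.card ι) * nodal univ v := by
  set n := Fintype.card ι
  have hdeg : (nodal univ v).degree = n := by rw [degree_nodal, card_univ]
  have hnodal : hermiteOp n (nodal univ v) = 0 := by
    refine eq_zero_of_degree_lt_of_eval_index_eq_zero univ hv.injOn ?_ fun j _ => ?_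
    · rw [card_univ]
      exact degree_hermiteOp_lt (natDegree_le_of_degree_le hdeg.le)
    · rw [hermiteOp, eval_add, eval_sub, eval_mul, eval_mul, eval_mul, eval_X, eval_C,
        eval_ofNat, eval_nodal_at_node (mem_univ j),
        eval_derivative_derivative_nodal_at_node hv.injOn (mem_univ j), ← hcrit j]
      ring
  refine sub_eq_zero.1 (eq_zero_of_hermiteOp_eq_zero (n := n) ?_ ?_)
  · rw [hermiteOp_sub_C_mul, hermiteOp_physHermite, hnodal, mul_zero, sub_zero]
  · have hH : (physHermite n).degree = n := by
      rw [degree_eq_natDegree (physHermite_ne_zero n), natDegree_physHermite]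
    have hC : (C (2 ^ n : ℝ) * nodal univ v).degree = n := by
      rw [degree_C_mul (by positivity), hdeg]
    rw [← hH]
    refine degree_sub_lt_left (hH.trans hC.symm) (physHermite_ne_zero n) ?_
    rw [leadingCoeff_physHermite, leadingCoeff_mul, leadingCoeff_C, nodal_monic.leadingCoeff,
      mul_one]

section Chamber

variable {ι : Type*}

lemma isOpen_setOf_strictMono [Finite ι] [Preorder ι] :
    IsOpen {x : ι → ℝ | StrictMono x} := by
  simp only [StrictMono, Set.ofPred_forall]
  exact isOpen_iInter_of_finite fun i => isOpen_iInter_of_finite fun j =>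
    isOpen_iInter_of_finite fun _ => isOpen_lt (continuous_apply i) (continuous_apply j)

lemma convex_setOf_strictMono [Preorder ι] : Convex ℝ {x : ι → ℝ | StrictMono x} := by
  intro x (hx : StrictMono x) y (hy : StrictMono y) a b ha hb hab
  rcases ha.lt_or_eq with ha | rfl
  · exact fun i j hij => add_lt_add_of_lt_of_le (mul_lt_mul_of_pos_left (hx hij) ha)
      (mul_le_mul_of_nonneg_left (hy hij).le hb)
  · rw [zero_add] at hab
    simpa [hab] using hy

lemma strictConvexOn_sum_sq_div_two [Fintype ι] :
    StrictConvexOn ℝ Set.univ (fun x : ι → ℝ => ∑ i, x i ^ 2 / 2) := by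
  refine ⟨convex_univ, fun x _ y _ hxy a b ha hb hab => ?_⟩
  obtain ⟨i, hi⟩ := Function.ne_iff.1 hxy
  simp only [Pi.add_apply, Pi.smul_apply, smul_eq_mul, mul_sum, ← sum_add_distrib]
  have hb' : b = 1 - a := by linarith
  subst hb'
  have key (u v : ℝ) :
      a * (u ^ 2 / 2) + (1 - a) * (v ^ 2 / 2) - (a * u + (1 - a) * v) ^ 2 / 2 =
        a * (1 - a) * (u - v) ^ 2 / 2 := by ring
  refine sum_lt_sum (fun k _ => ?_) ⟨i, mem_univ i, ?_⟩
  · nlinarith [key (x k) (y k), mul_nonneg (mul_nonneg ha.le hb.le) (sq_nonneg (x k - y k))]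
  · have : x i - y i ≠ 0 := sub_ne_zero.2 hi
    have : 0 < a * (1 - a) * (x i - y i) ^ 2 := by positivity
    linarith [key (x i) (y i)]

lemma concaveOn_log_sub [Preorder ι] {i j : ι} (hij : i < j) :
    ConcaveOn ℝ {x : ι → ℝ | StrictMono x} (fun x => log (x j - x i)) := by
  have h := strictConcaveOn_log_Ioi.concaveOn.comp_linearMap
    (LinearMap.proj (R := ℝ) (φ := fun _ : ι => ℝ) j - LinearMap.proj i)
  exact h.subset (fun x (hx : StrictMono x) => Set.mem_preimage.2 (sub_pos.2 (hx hij)))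
    convex_setOf_strictMono

end Chamber

lemma ConcaveOn.sum {𝕜 E β ι : Type*} [Semiring 𝕜] [PartialOrder 𝕜] [AddCommMonoid E]
    [AddCommMonoid β] [PartialOrder β] [IsOrderedAddMonoid β] [SMul 𝕜 E] [Module 𝕜 β]
    {s : Set E} {f : ι → E → β} {t : Finset ι} (hs : Convex 𝕜 s)
    (hf : ∀ i ∈ t, ConcaveOn 𝕜 s (f i)) :
    ConcaveOn 𝕜 s (fun x => ∑ i ∈ t, f i x) := by
  classical
  induction t using Finset.induction_on with
  | empty => simpa using concaveOn_const 0 hs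
  | insert i t hi ih =>
    simp_rw [sum_insert hi]
    exact (hf i (mem_insert_self i t)).add (ih fun k hk => hf k (mem_insert_of_mem hk))

lemma Real.log_le_sq_div_add {t a : ℝ} (ht : 0 < t) (ha : 0 < a) : log t ≤ t ^ 2 / a + a := by
  have h : t ≤ t ^ 2 / a + a / 4 := by
    rw [← sub_nonneg]
    have : t ^ 2 / a + a / 4 - t = (t - a / 2) ^ 2 / a := by field_simp; ring
    rw [this]
    positivity
  linarith [log_le_sub_one_of_pos ht]

lemma sq_sub_le_four_mul_sum {ι : Type*} [Fintype ι] (x : ι → ℝ) {i j : ι} (hij : i ≠ j) :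
    (x j - x i) ^ 2 ≤ 4 * ∑ l, x l ^ 2 / 2 := by
  classical
  have hpair : x j ^ 2 / 2 + x i ^ 2 / 2 ≤ ∑ l, x l ^ 2 / 2 := by
    rw [← sum_pair (f := fun l => x l ^ 2 / 2) hij.symm]
    exact sum_le_sum_of_subset_of_nonneg (subset_univ _) fun _ _ _ => by positivity
  nlinarith [sq_nonneg (x j + x i)]

lemma sum_pairs_single_div {ι : Type*} [Fintype ι] [LinearOrder ι] (x : ι → ℝ) (l : ι) :
    ∑ p ∈ univ.filter (fun p : ι × ι => p.1 < p.2),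
      ((Pi.single l 1 : ι → ℝ) p.2 - (Pi.single l 1 : ι → ℝ) p.1) / (x p.2 - x p.1) =
      ∑ k ∈ univ.erase l, (x l - x k)⁻¹ := by
  set h : ι → ℝ := fun k =>
    (if k < l then (x l - x k)⁻¹ else 0) - if l < k then (x k - x l)⁻¹ else 0
  have hsplit (i j : ι) :
      (if i < j then ((Pi.single l 1 : ι → ℝ) j - (Pi.single l 1 : ι → ℝ) i) / (x j - x i)
        else 0) =
      (if j = l then (if i < l then (x l - x i)⁻¹ else 0) else 0) -
        if i = l then (if l < j then (x j - x l)⁻¹ else 0) else 0 := by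
    by_cases hj : j = l <;> by_cases hi : i = l <;> subst_vars <;> split_ifs <;> simp_all [neg_div]
  calc _ = ∑ k, h k := by
        simp only [sum_filter, Fintype.sum_prod_type, hsplit, sum_sub_distrib, sum_ite_eq',
          mem_univ, if_true, sum_ite_irrel, sum_const_zero, h]
    _ = ∑ k ∈ univ.erase l, h k := (sum_erase _ (by simp [h])).symm
    _ = _ := sum_congr rfl fun k hk => by
        rcases lt_or_gt_of_ne (ne_of_mem_erase hk) with hkl | hlk
        · simp [h, hkl, hkl.not_gt]
        · simp only [h, hlk, hlk.not_gt, if_true, if_false, zero_sub]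
          rw [← inv_neg, neg_sub]

lemma exists_isMinOn_of_sublevel_subset {X α : Type*} [TopologicalSpace X] [LinearOrder α]
    [TopologicalSpace α] [ClosedIicTopology α] {f : X → α} {s K : Set X} (hK : IsCompact K)
    (hKs : K ⊆ s) (hf : ContinuousOn f K) {x₀ : X} (hx₀ : x₀ ∈ s)
    (hsub : ∀ x ∈ s, f x ≤ f x₀ → x ∈ K) : ∃ z ∈ s, IsMinOn f s z := by
  have hx₀K := hsub x₀ hx₀ le_rfl
  obtain ⟨z, hzK, hz⟩ := hK.exists_isMinOn ⟨x₀, hx₀K⟩ hf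
  refine ⟨z, hKs hzK, fun x hx => ?_⟩
  by_cases hxle : f x ≤ f x₀
  · exact hz (hsub x hx hxle)
  · exact (hz hx₀K).trans (le_of_not_ge hxle)

section LogGas

variable {N : ℕ}

lemma strictConvexOn_UG : StrictConvexOn ℝ {x : Fin N → ℝ | StrictMono x} (UG N) :=
  (strictConvexOn_sum_sq_div_two.subset (Set.subset_univ _) convex_setOf_strictMono).sub_concaveOn
    (ConcaveOn.sum convex_setOf_strictMono fun _ hp => concaveOn_log_sub (mem_filter.1 hp).2)

lemma continuousOn_UG : ContinuousOn (UG N) {x : Fin N → ℝ | StrictMono x} :=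
  (continuous_finsetSum _ fun _ _ => by fun_prop).continuousOn.sub
    (continuousOn_finsetSum _ fun _ hp => ContinuousOn.log (by fun_prop)
      fun _ hx => (sub_pos.2 (hx (mem_filter.1 hp).2)).ne')

-- With `Q = ∑ x_l² / 2` and `a = 8 N² + 1`, each of the at most `N²` terms
-- `log (x k - x j)` is at most `4 Q / a + a`, and `N² (4 Q / a + a) ≤ Q / 2 + logGasConst N`.
noncomputable def logGasConst (N : ℕ) : ℝ := N ^ 2 * (8 * N ^ 2 + 1)

lemma sum_log_sub_le {x : Fin N → ℝ} (hx : StrictMono x) {s : Finset (Fin N × Fin N)}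
    (hs : s ⊆ univ.filter fun p => p.1 < p.2) :
    ∑ p ∈ s, log (x p.2 - x p.1) ≤ (∑ l, x l ^ 2 / 2) / 2 + logGasConst N := by
  set Q := ∑ l, x l ^ 2 / 2
  set a : ℝ := 8 * N ^ 2 + 1
  have ha : 0 < a := by positivity
  have hQ : 0 ≤ Q := by positivity
  have hterm : ∀ p ∈ s, log (x p.2 - x p.1) ≤ 4 * Q / a + a := fun p hp => by
    have hlt := (mem_filter.1 (hs hp)).2
    calc log (x p.2 - x p.1) ≤ (x p.2 - x p.1) ^ 2 / a + a :=
          log_le_sq_div_add (sub_pos.2 (hx hlt)) ha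
      _ ≤ 4 * Q / a + a := by gcongr; exact sq_sub_le_four_mul_sum x hlt.ne
  have hcard : (#s : ℝ) ≤ N ^ 2 := by
    have := card_le_card (hs.trans (filter_subset _ _))
    rw [card_univ, Fintype.card_prod, Fintype.card_fin] at this
    exact_mod_cast this.trans_eq (sq N).symm
  have hQa : (N : ℝ) ^ 2 * (4 * Q / a) ≤ Q / 2 := by
    rw [mul_div_assoc', div_le_div_iff₀ ha two_pos]
    nlinarith
  calc ∑ p ∈ s, log (x p.2 - x p.1) ≤ #s * (4 * Q / a + a) := by
        simpa only [sum_const, nsmul_eq_mul] using sum_le_sum hterm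
    _ ≤ N ^ 2 * (4 * Q / a + a) := by gcongr
    _ ≤ Q / 2 + logGasConst N := by rw [logGasConst]; linarith

section Sublevel

variable {x : Fin N → ℝ} {c : ℝ}

lemma sum_sq_le_of_UG_le (hx : StrictMono x) (hc : UG N x ≤ c) :
    ∑ l, x l ^ 2 / 2 ≤ 2 * (c + logGasConst N) := by
  have := sum_log_sub_le hx (subset_refl _)
  rw [UG] at hc
  linarith

lemma abs_le_of_UG_le (hx : StrictMono x) (hc : UG N x ≤ c) (l : Fin N) :
    |x l| ≤ √(4 * (c + logGasConst N)) := by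
  refine abs_le_sqrt ?_
  have := single_le_sum (f := fun l => x l ^ 2 / 2) (fun _ _ => by positivity) (mem_univ l)
  linarith [sum_sq_le_of_UG_le hx hc]

lemma exp_le_sub_of_UG_le (hx : StrictMono x) (hc : UG N x ≤ c) {i j : Fin N}
    (hij : i < j) :
    exp (-(c + logGasConst N)) ≤ x j - x i := by
  have hmem : (i, j) ∈ univ.filter fun p : Fin N × Fin N => p.1 < p.2 := by simpa using hij
  have hrest := sum_log_sub_le hx ((erase_subset (i, j) _))
  have hsq : 0 ≤ ∑ l, x l ^ 2 / 2 := by positivity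
  rw [UG, ← add_sum_erase _ _ hmem] at hc
  rw [← exp_log (sub_pos.2 (hx hij)), exp_le_exp]
  linarith

end Sublevel

theorem exists_isMinOn_UG (N : ℕ) :
    ∃ z, StrictMono z ∧ IsMinOn (UG N) {x : Fin N → ℝ | StrictMono x} z := by
  set x₀ : Fin N → ℝ := fun i => (i : ℕ)
  have hx₀ : StrictMono x₀ := fun i j h => Nat.cast_lt.2 h
  set c := UG N x₀
  set B := √(4 * (c + logGasConst N))
  set δ := exp (-(c + logGasConst N))
  have hclosed : IsClosed {x : Fin N → ℝ | ∀ i j, i < j → δ ≤ x j - x i} := by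
    simp only [Set.ofPred_forall]
    exact isClosed_iInter fun i => isClosed_iInter fun j => isClosed_iInter fun _ =>
      isClosed_le continuous_const (by fun_prop)
  set K := Set.univ.pi (fun _ => Set.Icc (-B) B) ∩
    {x : Fin N → ℝ | ∀ i j, i < j → δ ≤ x j - x i}
  have hKs : K ⊆ {x | StrictMono x} := fun x hx i j hij =>
    sub_pos.1 ((exp_pos _).trans_le (hx.2 i j hij))
  exact exists_isMinOn_of_sublevel_subset
    ((isCompact_univ_pi fun _ => isCompact_Icc).inter_right hclosed) hKs (continuousOn_UG.mono hKs)
    hx₀ fun x hx hxc => ⟨fun l _ => abs_le.1 (abs_le_of_UG_le hx hxc l),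
      fun i j hij => exp_le_sub_of_UG_le hx hxc hij⟩

lemma hasDerivAt_UG_line {x : Fin N → ℝ} (hx : StrictMono x) (v : Fin N → ℝ) :
    HasDerivAt (fun t : ℝ => UG N (x + t • v))
      (∑ l, x l * v l - ∑ p ∈ univ.filter (fun p : Fin N × Fin N => p.1 < p.2),
        (v p.2 - v p.1) / (x p.2 - x p.1)) 0 := by
  have hline (l : Fin N) : HasDerivAt (fun t : ℝ => (x + t • v) l) (v l) 0 := by
    simpa using ((hasDerivAt_id (0 : ℝ)).mul_const (v l)).const_add (x l)
  unfold UG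
  refine (HasDerivAt.fun_sum fun l _ => ?_).sub (HasDerivAt.fun_sum fun p hp => ?_)
  · refine (((hline l).fun_pow 2).div_const 2).congr_deriv ?_
    simp only [Nat.cast_ofNat, zero_smul, add_zero, Nat.add_one_sub_one, pow_one]
    ring
  · have := ((hline p.2).sub (hline p.1)).log
      (by simpa using (sub_pos.2 (hx (mem_filter.1 hp).2)).ne')
    simpa using this

lemma eq_sum_inv_sub_of_isMinOn_UG {z : Fin N → ℝ} (hz : StrictMono z)
    (hmin : IsMinOn (UG N) {x : Fin N → ℝ | StrictMono x} z) (l : Fin N) :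
    z l = ∑ k ∈ univ.erase l, (z l - z k)⁻¹ := by
  set e : Fin N → ℝ := Pi.single l 1
  have hloc : IsLocalMin (fun t : ℝ => UG N (z + t • e)) 0 := by
    have h : IsLocalMin (UG N) (z + (0 : ℝ) • e) := by
      simpa using hmin.isLocalMin (isOpen_setOf_strictMono.mem_nhds hz)
    exact IsLocalMin.comp_continuous (g := fun t : ℝ => z + t • e) h (by fun_prop)
  have := hloc.hasDerivAt_eq_zero (hasDerivAt_UG_line hz _)
  rw [sum_pairs_single_div] at this
  simpa [e, Pi.single_apply, sub_eq_zero] using this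

end LogGas

theorem stmt_4_general (N : ℕ) :
    ∃ z : Fin N → ℝ, StrictMono z ∧ (∀ j, (physHermite N).eval (z j) = 0) ∧
      (∀ x : Fin N → ℝ, StrictMono x → UG N z ≤ UG N x) ∧
      (∀ x : Fin N → ℝ, StrictMono x → UG N x = UG N z → x = z) := by
  obtain ⟨z, hz, hmin⟩ := exists_isMinOn_UG N
  have hH : physHermite N = C (2 ^ N) * Lagrange.nodal univ z := by
    simpa using physHermite_eq_C_mul_nodal hz.injective (eq_sum_inv_sub_of_isMinOn_UG hz hmin)
  refine ⟨z, hz, fun j => ?_, fun x hx => hmin hx, fun x hx hxz => ?_⟩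
  · rw [hH, eval_mul, Lagrange.eval_nodal_at_node (mem_univ j), mul_zero]
  · exact strictConvexOn_UG.eq_of_isMinOn (fun y hy => hxz ▸ hmin hy) hmin hx hz

/-- Stieltjes' theorem (Gaussian case): on the chamber `x_1 < x_2 < ⋯ < x_N`, the energy
`U^G` has a unique global minimiser, given by the increasingly ordered zeros of the
physicists' Hermite polynomial `H_N`. -/
theorem stmt_4 (N : ℕ) (hN : 0 < N) :
    ∃ z : Fin N → ℝ, StrictMono z ∧ (∀ j, (physHermite N).eval (z j) = 0) ∧
      (∀ x : Fin N → ℝ, StrictMono x → UG N z ≤ UG N x) ∧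
      (∀ x : Fin N → ℝ, StrictMono x → UG N x = UG N z → x = z) :=
  stmt_4_general N
end

section
/- Define polynomials Q_p(α, a) ∈ ℚ[α, a] by Q_0 = 1 and Q_{k+1}(α, a) = α·Σ_{s=0}^{k} Q_s(α,a) Q_{k−s}(α,a) + (k + 1 + a)·Q_k(α,a) for k ≥ 0. Then for every positive integer N, every real a > 0 and every p ≥ 0, Q_p(−N, −a) = ((−1)^p / N) · Σ_{j=1}^N z_j^p, where z_1, …, z_N are the zeros of the generalized Laguerre polynomial L_N^{(a−1)}. (This is the high-low temperature duality relating the high-temperature Laguerre β-ensemble moments, evaluated at (α, a) = (−N, −a), to the Laguerre zeros.) -/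
open Polynomial Finset

/-- The generalized Laguerre polynomial `L_N^{(a-1)}(x) =
∑_{k=0}^N (-1)^k (Γ(N+a) / (Γ(k+a) (N-k)! k!)) x^k`. -/
noncomputable def laguerre (N : ℕ) (a : ℝ) : Polynomial ℝ :=
  ∑ k ∈ Finset.range (N + 1),
    Polynomial.C ((-1 : ℝ) ^ k *
      (Real.Gamma ((N : ℝ) + a) /
        (Real.Gamma ((k : ℝ) + a) * ((N - k).factorial : ℝ) * (k.factorial : ℝ)))) *
      Polynomial.X ^ k

lemma lag_coeff (N : ℕ) (a : ℝ) (n : ℕ) :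
    (laguerre N a).coeff n = if n ≤ N then (-1 : ℝ) ^ n *
      (Real.Gamma ((N : ℝ) + a) /
        (Real.Gamma ((n : ℝ) + a) * ((N - n).factorial : ℝ) * (n.factorial : ℝ))) else 0 := by
  rw [laguerre, finset_sum_coeff]
  simp only [coeff_C_mul, coeff_X_pow]
  by_cases h : n ≤ N
  · rw [if_pos h, Finset.sum_eq_single n]
    · simp
    · intro b _ hb; simp [Ne.symm hb]
    · intro hn; exact absurd (Finset.mem_range.mpr (Nat.lt_succ_of_le h)) hn
  · rw [if_neg h]
    apply Finset.sum_eq_zero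
    intro b hb
    have : n ≠ b := by
      rintro rfl; exact h (Nat.lt_succ_iff.mp (Finset.mem_range.mp hb))
    simp [this]

lemma gamma_ne (n : ℕ) (a : ℝ) (ha : 0 < a) : Real.Gamma ((n:ℝ) + a) ≠ 0 :=
  ne_of_gt (Real.Gamma_pos_of_pos (by positivity))

lemma lag_key (N : ℕ) (a : ℝ) (ha : 0 < a) (n : ℕ) :
    ((n:ℝ) + 1) * ((n:ℝ) + a) * (laguerre N a).coeff (n+1)
      + ((N:ℝ) - (n:ℝ)) * (laguerre N a).coeff n = 0 := by
  rw [lag_coeff, lag_coeff]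
  rcases lt_trichotomy n N with h | rfl | h
  · rw [if_pos (by omega : n + 1 ≤ N), if_pos h.le]
    have h1 : Real.Gamma ((n:ℝ) + 1 + a) = ((n:ℝ) + a) * Real.Gamma ((n:ℝ)+a) := by
      have := Real.Gamma_add_one (s := (n:ℝ) + a) (by positivity)
      rw [show (n:ℝ) + 1 + a = (n:ℝ) + a + 1 by ring, this]
    have h2 : ((n+1).factorial : ℝ) = ((n:ℝ)+1) * n.factorial := by
      rw [Nat.factorial_succ]; push_cast; ring
    have h3 : (N - n) = (N - (n+1)) + 1 := by omega
    have h4 : ((N - n).factorial : ℝ) = ((N:ℝ) - n) * ((N - (n+1)).factorial : ℝ) := by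
      rw [h3, Nat.factorial_succ]
      have : ((N - (n+1) + 1 : ℕ) : ℝ) = (N:ℝ) - n := by
        have : N - (n+1) + 1 = N - n := by omega
        rw [this]; push_cast [Nat.cast_sub h.le]; ring
      rw [Nat.cast_mul, this]
    have key : ∀ m : ℕ, ((m:ℝ)+1) ≠ 0 := fun m => by positivity
    have hg := gamma_ne n a ha
    have hf : (n.factorial : ℝ) ≠ 0 := Nat.cast_ne_zero.mpr n.factorial_ne_zero
    have hf2 : ((N - (n+1)).factorial : ℝ) ≠ 0 := Nat.cast_ne_zero.mpr (Nat.factorial_ne_zero _)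
    have hna : ((n:ℝ) + a) ≠ 0 := by positivity
    have hc : ((n:ℝ):ℝ) + 1 ≠ 0 := key n
    have hNn : (N:ℝ) - (n:ℝ) ≠ 0 := by
      have : (n:ℝ) < N := by exact_mod_cast h
      linarith
    push_cast
    rw [h1, h2, h4, pow_succ]
    field_simp
    ring
  · rw [if_neg (by omega), if_pos (le_refl _)]
    simp
  · rw [if_neg (by omega), if_neg (by omega)]
    simp

lemma lag_ode (N : ℕ) (a : ℝ) (ha : 0 < a) :
    X * derivative (derivative (laguerre N a)) + (C a - X) * derivative (laguerre N a)
      + C (N:ℝ) * laguerre N a = 0 := by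
  ext n
  simp only [coeff_add, coeff_zero, coeff_C_mul, sub_mul, coeff_sub, add_mul]
  cases n with
  | zero =>
    have h := lag_key N a ha 0
    simp only [coeff_X_mul_zero] at *
    simp only [coeff_derivative] at *
    push_cast at h ⊢
    linarith [h]
  | succ m =>
    have h := lag_key N a ha (m+1)
    rw [coeff_X_mul, coeff_X_mul]
    simp only [coeff_derivative] at *
    push_cast at h ⊢
    nlinarith [h]

lemma lag_coeff_N (N : ℕ) (a : ℝ) (ha : 0 < a) : (laguerre N a).coeff N ≠ 0 := by
  rw [lag_coeff, if_pos (le_refl N)]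
  have hg := gamma_ne N a ha
  have : ((N - N).factorial : ℝ) = 1 := by simp
  simp only [this]
  have hf : (N.factorial : ℝ) ≠ 0 := Nat.cast_ne_zero.mpr (Nat.factorial_ne_zero _)
  positivity

lemma lag_ne_zero (N : ℕ) (a : ℝ) (ha : 0 < a) : laguerre N a ≠ 0 := fun h => by
  have := lag_coeff_N N a ha; rw [h] at this; simp at this

lemma lag_natDegree (N : ℕ) (a : ℝ) (ha : 0 < a) : (laguerre N a).natDegree = N := by
  apply le_antisymm
  · apply Polynomial.natDegree_sum_le_of_forall_le
    intro k hk
    refine (Polynomial.natDegree_C_mul_le _ _).trans ?_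
    simp only [natDegree_X_pow]
    exact Nat.lt_succ_iff.mp (Finset.mem_range.mp hk)
  · exact Polynomial.le_natDegree_of_ne_zero (lag_coeff_N N a ha)

lemma lag_factor (N : ℕ) (a : ℝ) (ha : 0 < a) (z : Fin N → ℝ) (hinj : Function.Injective z)
    (hzero : ∀ j, (laguerre N a).eval (z j) = 0) :
    laguerre N a = C (laguerre N a).leadingCoeff * ∏ j, (X - C (z j)) := by
  have hP0 := lag_ne_zero N a ha
  have hmem : ∀ j, z j ∈ (laguerre N a).roots := fun j =>
    (Polynomial.mem_roots hP0).mpr (hzero j)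
  have hle : (Finset.image z Finset.univ).val ≤ (laguerre N a).roots := by
    rw [Finset.val_le_iff_val_subset]
    intro x hx
    obtain ⟨j, _, rfl⟩ := Finset.mem_image.mp (Finset.mem_def.mpr hx)
    exact hmem j
  have hcard : Multiset.card (laguerre N a).roots = (laguerre N a).natDegree := by
    apply le_antisymm ((laguerre N a).card_roots')
    rw [lag_natDegree N a ha]
    calc (N : ℕ) = (Finset.image z Finset.univ).card := by
          rw [Finset.card_image_of_injective _ hinj, Finset.card_univ, Fintype.card_fin]
      _ ≤ _ := Multiset.card_le_card hle
  have hroots : (laguerre N a).roots = (Finset.image z Finset.univ).val := by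
    symm
    apply Multiset.eq_of_le_of_card_le hle
    rw [hcard, lag_natDegree N a ha, ← Finset.card_def,
      Finset.card_image_of_injective _ hinj, Finset.card_univ, Fintype.card_fin]
  have := Polynomial.C_leadingCoeff_mul_prod_multiset_X_sub_C hcard
  rw [hroots] at this
  conv_lhs => rw [← this]
  congr 1
  rw [← Finset.prod_eq_multiset_prod, Finset.prod_image (fun x _ y _ h => hinj h)]

lemma derivative_fin_prod {ι : Type*} [DecidableEq ι] (s : Finset ι) (f : ι → Polynomial ℝ) :
    derivative (∏ i ∈ s, f i) = ∑ i ∈ s, (∏ j ∈ s.erase i, f j) * derivative (f i) := by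
  rw [Finset.prod_eq_multiset_prod, Polynomial.derivative_prod, Finset.sum_eq_multiset_sum]
  congr 1

section
variable {N : ℕ} {a : ℝ} {z : Fin N → ℝ}

lemma prod_eval_zero (hinj : Function.Injective z) {j j' : Fin N} (hjj : j ≠ j') :
    ∏ i ∈ Finset.univ.erase j', (z j - z i) = 0 :=
  Finset.prod_eq_zero (Finset.mem_erase.mpr ⟨hjj, Finset.mem_univ j⟩) (by ring)

lemma deriv_prod_eval (hinj : Function.Injective z) (j : Fin N) :
    eval (z j) (derivative (∏ i, (X - C (z i)))) =
      ∏ i ∈ Finset.univ.erase j, (z j - z i) := by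
  rw [derivative_fin_prod]
  simp only [derivative_sub, derivative_X, derivative_C, sub_zero, mul_one, eval_finset_sum,
    eval_prod, eval_sub, eval_X, eval_C]
  rw [Finset.sum_eq_single j]
  · intro b _ hb; exact prod_eval_zero hinj (Ne.symm hb)
  · intro h; exact absurd (Finset.mem_univ j) h

lemma deriv2_prod_eval (hinj : Function.Injective z) (j : Fin N) :
    eval (z j) (derivative (derivative (∏ i, (X - C (z i))))) =
      2 * ∑ i ∈ Finset.univ.erase j,
        ∏ l ∈ (Finset.univ.erase j).erase i, (z j - z l) := by
  rw [derivative_fin_prod]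
  simp only [derivative_sub, derivative_X, derivative_C, sub_zero, mul_one]
  rw [derivative_sum]
  simp only [derivative_fin_prod, derivative_sub, derivative_X, derivative_C, sub_zero, mul_one]
  rw [eval_finset_sum]
  simp only [eval_finset_sum, eval_prod, eval_sub, eval_X, eval_C]
  rw [Finset.sum_eq_add_sum_sdiff_singleton_of_mem (Finset.mem_univ j)]
  rw [two_mul]
  congr 1
  have hsd : (Finset.univ : Finset (Fin N)) \ {j} = Finset.univ.erase j := by
    ext x; simp [Finset.mem_erase, and_comm]
  rw [hsd]
  apply Finset.sum_congr rfl
  intro j' hj'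
  have hjj' : j' ≠ j := (Finset.mem_erase.mp hj').1
  rw [Finset.sum_eq_single j]
  · have : (Finset.univ.erase j').erase j = (Finset.univ.erase j).erase j' := by
      ext x; simp only [Finset.mem_erase]; tauto
    rw [this]
  · intro i hi hij
    apply Finset.prod_eq_zero (i := j)
    · rw [Finset.mem_erase, Finset.mem_erase]
      exact ⟨Ne.symm hij, Ne.symm hjj', Finset.mem_univ j⟩
    · ring
  · intro h
    exact absurd (Finset.mem_erase.mpr ⟨Ne.symm hjj', Finset.mem_univ j⟩) h

lemma factA (ha : 0 < a) (hinj : Function.Injective z)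
    (hzero : ∀ j, (laguerre N a).eval (z j) = 0) (j : Fin N) :
    2 * z j * (∑ i ∈ Finset.univ.erase j, (z j - z i)⁻¹) = z j - a := by
  set c := (laguerre N a).leadingCoeff with hcdef
  have hc : c ≠ 0 := Polynomial.leadingCoeff_ne_zero.mpr (lag_ne_zero N a ha)
  have hfac := lag_factor N a ha z hinj hzero
  have hsub : ∀ i ∈ Finset.univ.erase j, z j - z i ≠ 0 := by
    intro i hi
    exact sub_ne_zero.mpr fun h => (Finset.mem_erase.mp hi).1 (hinj h).symm
  set D := ∏ i ∈ Finset.univ.erase j, (z j - z i) with hDdef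
  have hD : D ≠ 0 := Finset.prod_ne_zero_iff.mpr hsub
  set E : Fin N → ℝ := fun i => ∏ l ∈ (Finset.univ.erase j).erase i, (z j - z l) with hEdef
  have hP' : eval (z j) (derivative (laguerre N a)) = c * D := by
    rw [hfac, derivative_mul, derivative_C, zero_mul, zero_add, eval_mul, eval_C,
      deriv_prod_eval hinj]
  have hP'' : eval (z j) (derivative (derivative (laguerre N a)))
      = c * (2 * ∑ i ∈ Finset.univ.erase j, E i) := by
    rw [hfac, derivative_mul, derivative_C, zero_mul, zero_add, derivative_mul,
      derivative_C, zero_mul, zero_add, eval_mul, eval_C, deriv2_prod_eval hinj]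
  have hode := lag_ode N a ha
  have hev := congrArg (eval (z j)) hode
  simp only [eval_add, eval_mul, eval_sub, eval_X, eval_C, eval_zero, hzero j, mul_zero,
    add_zero, hP', hP''] at hev
  -- hev : z j * (c * (2 * ∑ E)) + (a - z j) * (c * D) = 0
  have key : z j * (2 * ∑ i ∈ Finset.univ.erase j, E i) + (a - z j) * D = 0 := by
    have h' : c * (z j * (2 * ∑ i ∈ Finset.univ.erase j, E i) + (a - z j) * D) = c * 0 := by
      rw [mul_zero]
      linear_combination hev
    exact mul_left_cancel₀ hc h'
  have hsum : (∑ i ∈ Finset.univ.erase j, (z j - z i)⁻¹) * D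
      = ∑ i ∈ Finset.univ.erase j, E i := by
    rw [Finset.sum_mul]
    apply Finset.sum_congr rfl
    intro i hi
    have hDi : D = (z j - z i) * E i := (Finset.mul_prod_erase _ _ (by exact hi)).symm
    rw [hDi, inv_mul_cancel_left₀ (hsub i hi)]
  have goalD : 2 * z j * (∑ i ∈ Finset.univ.erase j, (z j - z i)⁻¹) * D = (z j - a) * D := by
    have h2 : 2 * z j * (∑ i ∈ Finset.univ.erase j, (z j - z i)⁻¹) * D
        = 2 * z j * (∑ i ∈ Finset.univ.erase j, E i) := by
      rw [mul_assoc _ _ D, hsum]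
    rw [h2]
    linear_combination key
  exact mul_right_cancel₀ hD goalD

lemma erase_sum_eq (g : Fin N → Fin N → ℝ) :
    (∑ j, ∑ i ∈ Finset.univ.erase j, g j i) = (∑ j, ∑ i, g j i) - ∑ j, g j j := by
  rw [← Finset.sum_sub_distrib]
  apply Finset.sum_congr rfl
  intro j _
  rw [Finset.sum_erase_eq_sub (Finset.mem_univ j)]

lemma swap_sum (f : Fin N → Fin N → ℝ) :
    ∑ j, ∑ i ∈ Finset.univ.erase j, f j i = ∑ j, ∑ i ∈ Finset.univ.erase j, f i j := by
  rw [erase_sum_eq, erase_sum_eq, Finset.sum_comm]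

lemma Srec (ha : 0 < a) (hinj : Function.Injective z)
    (hzero : ∀ j, (laguerre N a).eval (z j) = 0) (k : ℕ) :
    (∑ j, z j ^ (k+1)) = (∑ m ∈ Finset.range (k+1), (∑ j, z j ^ m) * (∑ j, z j ^ (k - m)))
      + (a - k - 1) * ∑ j, z j ^ k := by
  have hsub : ∀ j i : Fin N, i ≠ j → z j - z i ≠ 0 := fun j i hij =>
    sub_ne_zero.mpr fun h => hij (hinj h).symm
  have hA : ∀ j, z j ^ k * (z j - a)
      = 2 * ∑ i ∈ Finset.univ.erase j, z j ^ (k+1) * (z j - z i)⁻¹ := by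
    intro j
    rw [← factA ha hinj hzero j, Finset.mul_sum, Finset.mul_sum]
    rw [Finset.mul_sum]
    apply Finset.sum_congr rfl
    intro i _
    ring
  have h1 : ∑ j, z j ^ k * (z j - a)
      = 2 * ∑ j, ∑ i ∈ Finset.univ.erase j, z j ^ (k+1) * (z j - z i)⁻¹ := by
    rw [Finset.mul_sum]
    exact Finset.sum_congr rfl fun j _ => hA j
  have h2 : 2 * (∑ j, ∑ i ∈ Finset.univ.erase j, z j ^ (k+1) * (z j - z i)⁻¹)
      = ∑ j, ∑ i ∈ Finset.univ.erase j, (z j ^ (k+1) - z i ^ (k+1)) * (z j - z i)⁻¹ := by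
    have hswap := swap_sum (fun j i => z j ^ (k+1) * (z j - z i)⁻¹)
    rw [two_mul]
    nth_rewrite 2 [hswap]
    rw [← Finset.sum_add_distrib]
    apply Finset.sum_congr rfl
    intro j _
    rw [← Finset.sum_add_distrib]
    apply Finset.sum_congr rfl
    intro i hi
    have : (z i - z j)⁻¹ = -(z j - z i)⁻¹ := by rw [← inv_neg, neg_sub]
    rw [this]
    ring
  have h3 : ∀ j, ∀ i ∈ Finset.univ.erase j,
      (z j ^ (k+1) - z i ^ (k+1)) * (z j - z i)⁻¹
        = ∑ m ∈ Finset.range (k+1), z j ^ m * z i ^ (k - m) := by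
    intro j i hi
    have hne : z j - z i ≠ 0 := hsub j i (Finset.mem_erase.mp hi).1
    have hg := geom_sum₂_mul (z j) (z i) (k+1)
    simp only [Nat.add_sub_cancel] at hg
    rw [← hg, mul_inv_cancel_right₀ hne]
  have h4 : ∑ j, ∑ i ∈ Finset.univ.erase j, ∑ m ∈ Finset.range (k+1), z j ^ m * z i ^ (k - m)
      = (∑ m ∈ Finset.range (k+1), (∑ j, z j ^ m) * (∑ j, z j ^ (k - m)))
        - (k+1 : ℝ) * ∑ j, z j ^ k := by
    have hcomm : ∑ j, ∑ i ∈ Finset.univ.erase j, ∑ m ∈ Finset.range (k+1), z j ^ m * z i ^ (k - m)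
        = ∑ m ∈ Finset.range (k+1), ∑ j, ∑ i ∈ Finset.univ.erase j, z j ^ m * z i ^ (k - m) := by
      rw [Finset.sum_comm]
      apply Finset.sum_congr rfl
      intro m _
      rw [Finset.sum_comm]
    rw [hcomm]
    have : ∀ m ∈ Finset.range (k+1),
        (∑ j, ∑ i ∈ Finset.univ.erase j, z j ^ m * z i ^ (k - m))
          = (∑ j, z j ^ m) * (∑ j, z j ^ (k - m)) - ∑ j, z j ^ k := by
      intro m hm
      have hmk : m ≤ k := Nat.lt_succ_iff.mp (Finset.mem_range.mp hm)
      rw [erase_sum_eq]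
      congr 1
      · rw [← Finset.sum_mul_sum]
      · apply Finset.sum_congr rfl
        intro j _
        rw [← pow_add, Nat.add_sub_cancel' hmk]
    rw [Finset.sum_congr rfl this, Finset.sum_sub_distrib, Finset.sum_const, Finset.card_range]
    congr 1
    rw [nsmul_eq_mul]
    push_cast
    ring
  have hmain : ∑ j, z j ^ k * (z j - a)
      = (∑ m ∈ Finset.range (k+1), (∑ j, z j ^ m) * (∑ j, z j ^ (k - m)))
        - (k+1 : ℝ) * ∑ j, z j ^ k := by
    rw [h1, h2, ← h4]
    apply Finset.sum_congr rfl
    intro j _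
    exact Finset.sum_congr rfl (h3 j)
  have hL : ∑ j, z j ^ k * (z j - a) = (∑ j, z j ^ (k+1)) - a * ∑ j, z j ^ k := by
    rw [Finset.mul_sum, ← Finset.sum_sub_distrib]
    apply Finset.sum_congr rfl
    intro j _
    ring
  rw [hL] at hmain
  linarith [hmain]
end

/-- High-low temperature duality for the Laguerre β-ensemble moments: with
`Q_p(α,a) ∈ ℚ[α,a]` defined by `Q_0 = 1` and
`Q_{k+1} = α ∑_{s=0}^k Q_s Q_{k-s} + (k+1+a) Q_k`, one has
`Q_p(-N,-a) = ((-1)^p / N) ∑_{j=1}^N z_j^p`, where the `z_j` are the zeros of the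
generalized Laguerre polynomial `L_N^{(a-1)}`.  Here `α` is the variable `X 0` and `a`
is the variable `X 1`. -/
theorem stmt_14 (Q : ℕ → MvPolynomial (Fin 2) ℚ)
    (h0 : Q 0 = 1)
    (hrec : ∀ k : ℕ,
      Q (k + 1) = MvPolynomial.X 0 * (∑ s ∈ range (k + 1), Q s * Q (k - s))
        + (MvPolynomial.C ((k : ℚ) + 1) + MvPolynomial.X 1) * Q k)
    (N : ℕ) (hN : 0 < N) (a : ℝ) (ha : 0 < a)
    (z : Fin N → ℝ) (hmono : StrictMono z)
    (hzero : ∀ j, (laguerre N a).eval (z j) = 0) (p : ℕ) :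
    (MvPolynomial.aeval ![-(N : ℝ), -a]) (Q p)
      = ((-1 : ℝ) ^ p / N) * ∑ j, z j ^ p := by
  have hNr : (N:ℝ) ≠ 0 := Nat.cast_ne_zero.mpr hN.ne'
  have hinj := hmono.injective
  induction p using Nat.strong_induction_on with
  | _ p ih =>
    match p with
    | 0 =>
      rw [h0]
      simp only [map_one, pow_zero, one_div]
      rw [Finset.sum_const, Finset.card_univ, Fintype.card_fin, nsmul_eq_mul, mul_one]
      field_simp
    | (k+1) =>
      rw [hrec k]
      simp only [map_add, map_mul, map_sum, MvPolynomial.aeval_X, MvPolynomial.aeval_C,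
        Matrix.cons_val_zero, Matrix.cons_val_one, Matrix.head_cons]
      have hAe : ∀ s ∈ Finset.range (k+1),
          (MvPolynomial.aeval ![-(N : ℝ), -a]) (Q s) * (MvPolynomial.aeval ![-(N : ℝ), -a]) (Q (k-s))
            = ((-1:ℝ)^k / ((N:ℝ)*(N:ℝ))) * ((∑ j, z j ^ s) * (∑ j, z j ^ (k-s))) := by
        intro s hs
        have hsk : s ≤ k := Nat.lt_succ_iff.mp (Finset.mem_range.mp hs)
        rw [ih s (by omega), ih (k-s) (by omega)]
        have hpow : (-1:ℝ)^s * (-1:ℝ)^(k-s) = (-1:ℝ)^k := by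
          rw [← pow_add, Nat.add_sub_cancel' hsk]
        calc ((-1:ℝ) ^ s / N * ∑ j, z j ^ s) * ((-1:ℝ) ^ (k-s) / N * ∑ j, z j ^ (k-s))
            = ((-1:ℝ)^s * (-1:ℝ)^(k-s)) / ((N:ℝ)*(N:ℝ)) * ((∑ j, z j ^ s) * (∑ j, z j ^ (k-s))) := by
              ring
          _ = _ := by rw [hpow]
      rw [Finset.sum_congr rfl hAe, ← Finset.mul_sum]
      rw [ih k (by omega)]
      have hS := Srec ha hinj hzero k
      simp only [map_natCast, map_one]
      set Sk1 := ∑ j, z j ^ (k+1)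
      set Sk := ∑ j, z j ^ k
      set T := ∑ m ∈ Finset.range (k+1), (∑ j, z j ^ m) * (∑ j, z j ^ (k - m))
      rw [hS]
      field_simp
      ring
end
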